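/- arXiv:2101.05121 — 2 statements merged into one kernel-verified Lean document; each statement's English description precedes it below -/
import Mathlib

section
/- Let T_t(x) = e^{itM} x e^{-itM} on B(H) where M is a bounded self-adjoint operator with pure point spectrum diagonalized by an orthonormal basis (e_n) with Me_n = λ_n e_n. If p is a projection and there exist a scalar μ ∈ ℂ and a net of times t_α → ∞ with weak*-lim T_{t_α}(p) = μ·1, then p = μ·1, and hence p = 0 or p = 1. -/
/-!
In the eigenbasis of `M`, the matrix coefficients of `T_t(p)` are those of `p` multiplied by the
phases `e^{it(λ_l - λ_k)}`. Diagonal coefficients are therefore constant in `t` and off-diagonal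
ones have constant modulus, so the weak* limit `μ·1` determines every matrix coefficient of `p`,
giving `p = μ·1`. Idempotence of `p` then forces `μ² = μ`.
-/

open Filter ComplexConjugate

namespace ContinuousLinearMap

section RCLike

variable {𝕜 E : Type*} [RCLike 𝕜] [NormedAddCommGroup E] [InnerProductSpace 𝕜 E] [CompleteSpace E]
  {u : E →L[𝕜] E}

theorem star_apply_eq_inv_smul_of_mem_unitary (hu : u ∈ unitary (E →L[𝕜] E)) {v : E} {c : 𝕜}
    (hv : u v = c • v) : star u v = c⁻¹ • v := by
  have hinv : star u (u v) = v := by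
    simpa using congrArg (· v) (Unitary.star_mul_self_of_mem hu)
  rw [hv, map_smul] at hinv
  rcases eq_or_ne c 0 with rfl | hc
  · rw [zero_smul] at hinv
    simp [← hinv]
  · rwa [eq_inv_smul_iff₀ hc]

theorem inner_unitary_conj_apply (hu : u ∈ unitary (E →L[𝕜] E)) {v w : E} {c d : 𝕜}
    (hv : u v = c • v) (hw : u w = d • w) (x : E →L[𝕜] E) :
    inner 𝕜 w ((u * x * star u) v) = conj d⁻¹ * c⁻¹ * inner 𝕜 w (x v) := by
  rw [mul_apply_eq_comp, mul_apply_eq_comp, ← adjoint_inner_left, ← star_eq_adjoint,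
    star_apply_eq_inv_smul_of_mem_unitary hu hv, star_apply_eq_inv_smul_of_mem_unitary hu hw,
    map_smul, inner_smul_left, inner_smul_right, mul_assoc]

end RCLike

section PhaseEigenbasis

variable {H ι : Type*} [NormedAddCommGroup H] [InnerProductSpace ℂ H] [CompleteSpace H]
  {u : H →L[ℂ] H} {e : ι → H} {θ : ι → ℝ}

theorem inner_unitary_conj_apply_of_apply_eq_exp (hu : u ∈ unitary (H →L[ℂ] H))
    (he : ∀ n, u (e n) = Complex.exp (Complex.I * θ n) • e n) (x : H →L[ℂ] H) (k l : ι) :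
    inner ℂ (e l) ((u * x * star u) (e k)) =
      Complex.exp (((θ l - θ k : ℝ) : ℂ) * Complex.I) * inner ℂ (e l) (x (e k)) := by
  rw [inner_unitary_conj_apply hu (he k) (he l), ← Complex.exp_neg, ← Complex.exp_neg,
    ← Complex.exp_conj, ← Complex.exp_add]
  congr 2
  simp only [map_neg, map_mul, Complex.conj_I, Complex.conj_ofReal, neg_mul, neg_neg,
    Complex.ofReal_sub]
  ring

theorem inner_unitary_conj_apply_self_of_apply_eq_exp (hu : u ∈ unitary (H →L[ℂ] H))
    (he : ∀ n, u (e n) = Complex.exp (Complex.I * θ n) • e n) (x : H →L[ℂ] H) (k : ι) :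
    inner ℂ (e k) ((u * x * star u) (e k)) = inner ℂ (e k) (x (e k)) := by
  rw [inner_unitary_conj_apply_of_apply_eq_exp hu he, sub_self, Complex.ofReal_zero, zero_mul,
    Complex.exp_zero, one_mul]

theorem norm_inner_unitary_conj_apply_of_apply_eq_exp (hu : u ∈ unitary (H →L[ℂ] H))
    (he : ∀ n, u (e n) = Complex.exp (Complex.I * θ n) • e n) (x : H →L[ℂ] H) (k l : ι) :
    ‖inner ℂ (e l) ((u * x * star u) (e k))‖ = ‖inner ℂ (e l) (x (e k))‖ := by
  rw [inner_unitary_conj_apply_of_apply_eq_exp hu he, norm_mul, Complex.norm_exp_ofReal_mul_I,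
    one_mul]

end PhaseEigenbasis

end ContinuousLinearMap

theorem HilbertBasis.continuousLinearMap_ext_inner {ι 𝕜 E F : Type*} [RCLike 𝕜]
    [NormedAddCommGroup E] [InnerProductSpace 𝕜 E] [NormedAddCommGroup F] [InnerProductSpace 𝕜 F]
    (b : HilbertBasis ι 𝕜 E) (c : HilbertBasis ι 𝕜 F) {A B : E →L[𝕜] F}
    (h : ∀ k l, inner 𝕜 (c l) (A (b k)) = inner 𝕜 (c l) (B (b k))) : A = B := by
  refine ContinuousLinearMap.ext_on
    (Submodule.dense_iff_topologicalClosure_eq_top.mpr b.dense_span) ?_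
  rintro _ ⟨k, rfl⟩
  exact c.repr.injective <| lp.ext <| funext fun l => by simp only [c.repr_apply_apply, h]

theorem eq_zero_or_one_of_isIdempotentElem_smul_one {R A : Type*} [Field R] [Ring A]
    [Algebra R A] [Nontrivial A] {μ : R} (h : IsIdempotentElem (μ • (1 : A))) :
    μ = 0 ∨ μ = 1 := by
  rw [← Algebra.algebraMap_eq_smul_one] at h
  exact IsIdempotentElem.iff_eq_zero_or_one.mp <|
    (algebraMap R A).injective (by simpa [IsIdempotentElem] using h)

theorem projection_weak_limit_scalar_general {H : Type*} [NormedAddCommGroup H]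
    [InnerProductSpace ℂ H] [CompleteSpace H]
    (b : HilbertBasis ℕ ℂ H) (lam : ℕ → ℝ)
    (U : ℝ → (H →L[ℂ] H))
    (hUunitary : ∀ t, U t ∈ unitary (H →L[ℂ] H))
    (hUe : ∀ (t : ℝ) (n : ℕ), U t (b n) = Complex.exp (Complex.I * t * lam n) • b n)
    (T : ℝ → (H →L[ℂ] H) → (H →L[ℂ] H))
    (hT : ∀ (t : ℝ) (x : H →L[ℂ] H), T t x = U t * x * star (U t))
    (p : H →L[ℂ] H) (hpIdem : p * p = p)
    (μ : ℂ)
    {ι : Type*} (f : Filter ι) [f.NeBot] (ts : ι → ℝ)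
    (hconv : ∀ k l : ℕ, Tendsto (fun a => (inner ℂ (b l) (T (ts a) p (b k)) : ℂ)) f
      (nhds (μ * if l = k then 1 else 0))) :
    p = μ • 1 ∧ (p = 0 ∨ p = 1) := by
  have hUe' (t : ℝ) (n : ℕ) : U t (b n) = Complex.exp (Complex.I * (t * lam n : ℝ)) • b n := by
    rw [hUe, Complex.ofReal_mul, mul_assoc]
  have hp : p = μ • 1 := by
    refine b.continuousLinearMap_ext_inner b fun k l => ?_
    have hlim := hconv k l
    simp only [hT] at hlim
    rw [smul_apply, one_apply_eq_self, inner_smul_right,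
      orthonormal_iff_ite.mp b.orthonormal]
    rcases eq_or_ne l k with rfl | hlk
    · simp only [ContinuousLinearMap.inner_unitary_conj_apply_self_of_apply_eq_exp
        (hUunitary _) (hUe' _)] at hlim
      simpa using tendsto_const_nhds_iff.mp hlim
    · have hnorm := hlim.norm
      simp only [ContinuousLinearMap.norm_inner_unitary_conj_apply_of_apply_eq_exp
        (hUunitary _) (hUe' _), if_neg hlk, mul_zero, norm_zero] at hnorm
      simpa [hlk] using tendsto_const_nhds_iff.mp hnorm
  have : Nontrivial H := ⟨_, _, b.orthonormal.ne_zero 0⟩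
  have hidem : IsIdempotentElem (μ • 1 : H →L[ℂ] H) := hp ▸ hpIdem
  refine ⟨hp, ?_⟩
  rcases eq_zero_or_one_of_isIdempotentElem_smul_one hidem with rfl | rfl <;> simp [hp]

/-- Let `T_t x = e^{itM} x e^{-itM}` where `M` is a bounded self-adjoint
operator diagonalized by an orthonormal (Hilbert) basis `(e_n)` with `M e_n = λ_n e_n`.
If `p` is a projection, `μ ∈ ℂ`, and along a net of times `t_α → ∞` the operators
`T_{t_α}(p)` converge weakly* to `μ·1` (tested against the rank-one operators
`|e_k⟩⟨e_l|`), then `p = μ·1`; hence `p = 0` or `p = 1`. -/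
theorem projection_weak_limit_scalar {H : Type*} [NormedAddCommGroup H]
    [InnerProductSpace ℂ H] [CompleteSpace H]
    (b : HilbertBasis ℕ ℂ H) (lam : ℕ → ℝ)
    (M : H →L[ℂ] H) (hM : IsSelfAdjoint M)
    (hMe : ∀ n, M (b n) = (lam n : ℂ) • b n)
    (U : ℝ → (H →L[ℂ] H))
    (hUunitary : ∀ t, U t ∈ unitary (H →L[ℂ] H))
    (hUe : ∀ (t : ℝ) (n : ℕ), U t (b n) = Complex.exp (Complex.I * t * lam n) • b n)
    (T : ℝ → (H →L[ℂ] H) → (H →L[ℂ] H))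
    (hT : ∀ (t : ℝ) (x : H →L[ℂ] H), T t x = U t * x * star (U t))
    (p : H →L[ℂ] H) (hpSA : IsSelfAdjoint p) (hpIdem : p * p = p)
    (μ : ℂ)
    {ι : Type*} (f : Filter ι) [f.NeBot] (ts : ι → ℝ)
    (hts : Tendsto ts f atTop)
    (hconv : ∀ k l : ℕ, Tendsto (fun a => (inner ℂ (b l) (T (ts a) p (b k)) : ℂ)) f
      (nhds (μ * if l = k then 1 else 0))) :
    p = μ • 1 ∧ (p = 0 ∨ p = 1) :=
  projection_weak_limit_scalar_general b lam U hUunitary hUe T hT p hpIdem μ f ts hconv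
end

section
/- Let T_t act on B(K ⊗ F) by T_t(x ⊗ y) = e^{itK₀} x e^{-itK₀} ⊗ S_t(y) for bounded self-adjoint K₀ on K and a quantum Markov semigroup S_t on B(F). If x ⊗ y belongs to the decoherence-free subalgebra N(T) with x ≠ 0, then y belongs to N(S). -/
/-!
Conjugation by the unitary `e^{itK₀}` is a `⋆`-automorphism, so for `a = x ⊗ y` both
`T_t (a⋆a)` and `T_t(a)⋆ T_t(a)` have the same first factor `e^{itK₀} x⋆x e^{-itK₀}`, which is
nonzero by the C⋆-identity `‖x⋆x‖ = ‖x‖²`. Cancelling it leaves `S_t (y⋆y) = S_t(y)⋆ S_t(y)`,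
and likewise for `y y⋆`.
-/

/-- The decoherence-free subalgebra `N(T)` of a one-parameter family of maps on the
bounded operators of a Hilbert space. -/
def decoherenceFree {E : Type*} [NormedAddCommGroup E] [InnerProductSpace ℂ E]
    [CompleteSpace E] (T : ℝ → (E →L[ℂ] E) → (E →L[ℂ] E)) : Set (E →L[ℂ] E) :=
  {a | ∀ t : ℝ, 0 ≤ t →
    T t (star a * a) = star (T t a) * T t a ∧ T t (a * star a) = T t a * star (T t a)}

open Complex

theorem IsSelfAdjoint.exp_I_mul_smul_mem_unitary {A : Type*} [NormedRing A] [NormedAlgebra ℂ A]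
    [CompleteSpace A] [StarRing A] [ContinuousStar A] [StarModule ℂ A] {a : A}
    (ha : IsSelfAdjoint a) (t : ℝ) : NormedSpace.exp ((I * t) • a) ∈ unitary A :=
  let +nondep : NormedAlgebra ℚ A := .restrictScalars ℚ ℂ A
  NormedSpace.exp_mem_unitary_of_mem_skewAdjoint <|
    IsSelfAdjoint.smul_mem_skewAdjoint (by simp [skewAdjoint.mem_iff, mul_comm]) ha

theorem mem_decoherenceFree_of_tens_mem {A F G : Type*}
    [NonUnitalNormedRing A] [StarRing A] [CStarRing A] [SMul ℂ A]
    [NormedAddCommGroup F] [InnerProductSpace ℂ F] [CompleteSpace F]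
    [NormedAddCommGroup G] [InnerProductSpace ℂ G] [CompleteSpace G]
    {tens : A → (F →L[ℂ] F) → (G →L[ℂ] G)}
    (htensMul : ∀ a c : A, ∀ b d : F →L[ℂ] F, tens a b * tens c d = tens (a * c) (b * d))
    (htensStar : ∀ a b, star (tens a b) = tens (star a) (star b))
    (htensInj : ∀ (c : A) (z w : F →L[ℂ] F), c ≠ 0 → tens c z = tens c w → z = w)
    (φ : ℝ → A ≃⋆ₐ[ℂ] A) {S : ℝ → (F →L[ℂ] F) → (F →L[ℂ] F)}
    {T : ℝ → (G →L[ℂ] G) → (G →L[ℂ] G)} (hT : ∀ t x y, T t (tens x y) = tens (φ t x) (S t y))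
    {x : A} {y : F →L[ℂ] F} (hx : x ≠ 0) (hxy : tens x y ∈ decoherenceFree T) :
    y ∈ decoherenceFree S := by
  intro t ht
  obtain ⟨hstar_mul, hmul_star⟩ := hxy t ht
  simp only [htensStar, htensMul, hT, ← map_star, ← map_mul] at hstar_mul hmul_star
  have hφ {c : A} (hc : c ≠ 0) : φ t c ≠ 0 := (map_ne_zero_iff _ (φ t).injective).mpr hc
  exact ⟨htensInj _ _ _ (hφ <| (CStarRing.star_mul_self_ne_zero_iff x).mpr hx) hstar_mul,
    htensInj _ _ _ (hφ <| (CStarRing.mul_star_self_ne_zero_iff x).mpr hx) hmul_star⟩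

theorem second_factor_of_decoherenceFree_general {K F G : Type*}
    [NormedAddCommGroup K] [InnerProductSpace ℂ K] [CompleteSpace K]
    [NormedAddCommGroup F] [InnerProductSpace ℂ F] [CompleteSpace F]
    [NormedAddCommGroup G] [InnerProductSpace ℂ G] [CompleteSpace G]
    (tens : (K →L[ℂ] K) → (F →L[ℂ] F) → (G →L[ℂ] G))
    (htensMul : ∀ a c : K →L[ℂ] K, ∀ b d : F →L[ℂ] F,
      tens a b * tens c d = tens (a * c) (b * d))
    (htensStar : ∀ (a : K →L[ℂ] K) (b : F →L[ℂ] F),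
      star (tens a b) = tens (star a) (star b))
    (htensInj : ∀ (c : K →L[ℂ] K) (z w : F →L[ℂ] F), c ≠ 0 → tens c z = tens c w → z = w)
    (K₀ : K →L[ℂ] K) (hK₀ : IsSelfAdjoint K₀)
    (U : ℝ → (K →L[ℂ] K))
    (hU : ∀ t : ℝ, U t = NormedSpace.exp ((Complex.I * (t : ℂ)) • K₀))
    (S : ℝ → (F →L[ℂ] F) → (F →L[ℂ] F))
    (T : ℝ → (G →L[ℂ] G) → (G →L[ℂ] G))
    (hT : ∀ (t : ℝ) (x : K →L[ℂ] K) (y : F →L[ℂ] F),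
      T t (tens x y) = tens (U t * x * star (U t)) (S t y)) :
    ∀ (x : K →L[ℂ] K) (y : F →L[ℂ] F), x ≠ 0 → tens x y ∈ decoherenceFree T →
      y ∈ decoherenceFree S := by
  intro x y hx hxy
  let u (t : ℝ) : unitary (K →L[ℂ] K) := ⟨U t, hU t ▸ hK₀.exp_I_mul_smul_mem_unitary t⟩
  exact mem_decoherenceFree_of_tens_mem htensMul htensStar htensInj
    (fun t ↦ Unitary.conjStarAlgAut ℂ _ (u t)) hT hx hxy

/-- Let `T_t` act on `B(K ⊗ F)` by
`T_t (x ⊗ y) = e^{itK₀} x e^{-itK₀} ⊗ S_t y` for a bounded self-adjoint `K₀` on `K` and a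
quantum Markov semigroup `(S_t)` on `B(F)` (the tensor embedding is encoded as a
`*`-multiplicative, unital map `tens` which is injective in the second variable against
nonzero first entries). If `x ⊗ y ∈ N(T)` with `x ≠ 0`, then `y ∈ N(S)`. -/
theorem second_factor_of_decoherenceFree {K F G : Type*}
    [NormedAddCommGroup K] [InnerProductSpace ℂ K] [CompleteSpace K]
    [NormedAddCommGroup F] [InnerProductSpace ℂ F] [CompleteSpace F]
    [NormedAddCommGroup G] [InnerProductSpace ℂ G] [CompleteSpace G]
    (tens : (K →L[ℂ] K) → (F →L[ℂ] F) → (G →L[ℂ] G))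
    (htensMul : ∀ a c : K →L[ℂ] K, ∀ b d : F →L[ℂ] F,
      tens a b * tens c d = tens (a * c) (b * d))
    (htensStar : ∀ (a : K →L[ℂ] K) (b : F →L[ℂ] F),
      star (tens a b) = tens (star a) (star b))
    (htensOne : tens 1 1 = 1)
    (htensInj : ∀ (c : K →L[ℂ] K) (z w : F →L[ℂ] F), c ≠ 0 → tens c z = tens c w → z = w)
    (K₀ : K →L[ℂ] K) (hK₀ : IsSelfAdjoint K₀)
    (U : ℝ → (K →L[ℂ] K))
    (hU : ∀ t : ℝ, U t = NormedSpace.exp ((Complex.I * (t : ℂ)) • K₀))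
    (S : ℝ → (F →L[ℂ] F) → (F →L[ℂ] F))
    (T : ℝ → (G →L[ℂ] G) → (G →L[ℂ] G))
    (hT : ∀ (t : ℝ) (x : K →L[ℂ] K) (y : F →L[ℂ] F),
      T t (tens x y) = tens (U t * x * star (U t)) (S t y))
    (hmult : ∀ t : ℝ, 0 ≤ t → ∀ a ∈ decoherenceFree T, ∀ b : G →L[ℂ] G,
      T t (b * a) = T t b * T t a ∧ T t (a * b) = T t a * T t b) :
    ∀ (x : K →L[ℂ] K) (y : F →L[ℂ] F), x ≠ 0 → tens x y ∈ decoherenceFree T →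
      y ∈ decoherenceFree S :=
  second_factor_of_decoherenceFree_general tens htensMul htensStar htensInj K₀ hK₀ U hU S T hT
end
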